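/- Let d ∈ {2, 3} and let R > 0. There exists a constant C > 0 (depending only on d and R) such that for all smooth (C^∞) vector fields u, v, w : ℝ^d → ℝ^d supported in the closed ball of radius R centered at the origin, |b*(u,v,w)| ≤ C · ‖Du‖_{L²} · ‖Dv‖_{L²} · ‖Dw‖_{L²}, where ‖Du‖_{L²} = (∫_{ℝ^d} ‖Du(x)‖² dx)^{1/2} with ‖Du(x)‖ the Euclidean (Frobenius) norm of the derivative matrix. -/

import Mathlib

open MeasureTheory

/-- The Frobenius norm of a (continuous) linear map on `ℝ^d`, i.e. the Euclidean norm of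
its matrix of entries in the standard basis. -/
noncomputable def frobNorm {d : ℕ}
    (f : EuclideanSpace ℝ (Fin d) →L[ℝ] EuclideanSpace ℝ (Fin d)) : ℝ :=
  Real.sqrt (∑ i, ∑ j, (f (EuclideanSpace.single j 1) i) ^ 2)

/-- The skew-symmetric trilinear form
`b*(u,v,w) = (1/2)∫ (u·∇)v · w − (1/2)∫ (u·∇)w · v`. -/
noncomputable def bstar {d : ℕ}
    (u v w : EuclideanSpace ℝ (Fin d) → EuclideanSpace ℝ (Fin d)) : ℝ :=
  (1 / 2) * (∫ x, (inner ℝ (fderiv ℝ v x (u x)) (w x) : ℝ)) -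
    (1 / 2) * (∫ x, (inner ℝ (fderiv ℝ w x (u x)) (v x) : ℝ))

open ENNReal NNReal Metric

section Aux

lemma frobNorm_nonneg' {d : ℕ} (f : EuclideanSpace ℝ (Fin d) →L[ℝ] EuclideanSpace ℝ (Fin d)) :
    0 ≤ frobNorm f := Real.sqrt_nonneg _

lemma opNorm_le_frobNorm {d : ℕ} (f : EuclideanSpace ℝ (Fin d) →L[ℝ] EuclideanSpace ℝ (Fin d)) :
    ‖f‖ ≤ frobNorm f := by
  apply ContinuousLinearMap.opNorm_le_bound _ (frobNorm_nonneg' f)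
  intro y
  have hy : y = ∑ j, y j • EuclideanSpace.single j 1 := by
    ext i
    rw [show (∑ j, y j • EuclideanSpace.single j 1 : EuclideanSpace ℝ (Fin d)) i
        = ∑ j, (y j • (EuclideanSpace.single j 1 : EuclideanSpace ℝ (Fin d))) i from
      by rw [WithLp.ofLp_sum, Finset.sum_apply]]
    simp [EuclideanSpace.single_apply, Finset.sum_ite_eq', mul_comm]
  have hfy : ∀ i, f y i = ∑ j, y j * f (EuclideanSpace.single j 1) i := by
    intro i
    conv_lhs => rw [hy]
    rw [map_sum]
    rw [show (∑ j, f (y j • EuclideanSpace.single j 1) : EuclideanSpace ℝ (Fin d)) i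
        = ∑ j, (f (y j • EuclideanSpace.single j 1) : EuclideanSpace ℝ (Fin d)) i from
      by rw [WithLp.ofLp_sum, Finset.sum_apply]]
    simp
  have key : ∀ i, (f y i) ^ 2 ≤ (∑ j, (y j) ^ 2) * ∑ j, (f (EuclideanSpace.single j 1) i) ^ 2 := by
    intro i
    rw [hfy i]
    exact Finset.sum_mul_sq_le_sq_mul_sq Finset.univ _ _
  have hnorm2 : ‖f y‖ ^ 2 = ∑ i, (f y i) ^ 2 := by
    rw [EuclideanSpace.norm_eq, Real.sq_sqrt (by positivity)]
    simp [sq_abs]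
  have hy2 : ‖y‖ ^ 2 = ∑ j, (y j) ^ 2 := by
    rw [EuclideanSpace.norm_eq, Real.sq_sqrt (by positivity)]
    simp [sq_abs]
  have h1 : ‖f y‖ ^ 2 ≤ (‖y‖ * frobNorm f) ^ 2 := by
    rw [hnorm2, mul_pow]
    calc ∑ i, (f y i) ^ 2
        ≤ ∑ i, (∑ j, (y j) ^ 2) * ∑ j, (f (EuclideanSpace.single j 1) i) ^ 2 :=
          Finset.sum_le_sum fun i _ => key i
      _ = ‖y‖ ^ 2 * ∑ i, ∑ j, (f (EuclideanSpace.single j 1) i) ^ 2 := by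
          rw [← Finset.mul_sum, hy2]
      _ = ‖y‖ ^ 2 * frobNorm f ^ 2 := by
          rw [frobNorm, Real.sq_sqrt (by positivity)]
  calc ‖f y‖ ≤ ‖y‖ * frobNorm f :=
        (pow_le_pow_iff_left₀ (norm_nonneg _)
          (mul_nonneg (norm_nonneg _) (frobNorm_nonneg' _)) two_ne_zero).mp h1
    _ = frobNorm f * ‖y‖ := mul_comm _ _

/-- Hölder's inequality with exponents (2,4,4). -/
lemma holder244 {α : Type*} [MeasurableSpace α] (μ : Measure α) {a b c : α → ℝ≥0∞}
    (ha : AEMeasurable a μ) (hb : AEMeasurable b μ) (hc : AEMeasurable c μ) :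
    ∫⁻ x, a x * b x * c x ∂μ ≤
      (∫⁻ x, a x ^ (2:ℝ) ∂μ) ^ ((1:ℝ)/2) * (∫⁻ x, b x ^ (4:ℝ) ∂μ) ^ ((1:ℝ)/4) *
        (∫⁻ x, c x ^ (4:ℝ) ∂μ) ^ ((1:ℝ)/4) := by
  have h22 : Real.HolderConjugate 2 2 := Real.HolderConjugate.two_two
  have step1 : ∫⁻ x, a x * b x * c x ∂μ ≤
      (∫⁻ x, a x ^ (2:ℝ) ∂μ) ^ ((1:ℝ)/2) * (∫⁻ x, (b x * c x) ^ (2:ℝ) ∂μ) ^ ((1:ℝ)/2) := by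
    have := ENNReal.lintegral_mul_le_Lp_mul_Lq μ h22 ha (hb.mul hc)
    simpa [mul_assoc] using this
  have step2 : ∫⁻ x, (b x * c x) ^ (2:ℝ) ∂μ ≤
      (∫⁻ x, b x ^ (4:ℝ) ∂μ) ^ ((1:ℝ)/2) * (∫⁻ x, c x ^ (4:ℝ) ∂μ) ^ ((1:ℝ)/2) := by
    have h := ENNReal.lintegral_mul_le_Lp_mul_Lq μ h22
      (hf := (hb.pow_const (2:ℝ))) (hg := (hc.pow_const (2:ℝ)))
    calc ∫⁻ x, (b x * c x) ^ (2:ℝ) ∂μ = ∫⁻ x, (b x ^ (2:ℝ)) * (c x ^ (2:ℝ)) ∂μ := by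
          simp_rw [ENNReal.mul_rpow_of_nonneg _ _ (by norm_num : (0:ℝ) ≤ 2)]
      _ ≤ (∫⁻ x, (b x ^ (2:ℝ)) ^ (2:ℝ) ∂μ) ^ ((1:ℝ)/2) *
            (∫⁻ x, (c x ^ (2:ℝ)) ^ (2:ℝ) ∂μ) ^ ((1:ℝ)/2) := by simpa using h
      _ = (∫⁻ x, b x ^ (4:ℝ) ∂μ) ^ ((1:ℝ)/2) * (∫⁻ x, c x ^ (4:ℝ) ∂μ) ^ ((1:ℝ)/2) := by
          simp_rw [← ENNReal.rpow_mul]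
          norm_num
  calc ∫⁻ x, a x * b x * c x ∂μ
      ≤ (∫⁻ x, a x ^ (2:ℝ) ∂μ) ^ ((1:ℝ)/2) * (∫⁻ x, (b x * c x) ^ (2:ℝ) ∂μ) ^ ((1:ℝ)/2) := step1
    _ ≤ (∫⁻ x, a x ^ (2:ℝ) ∂μ) ^ ((1:ℝ)/2) *
          ((∫⁻ x, b x ^ (4:ℝ) ∂μ) ^ ((1:ℝ)/2) * (∫⁻ x, c x ^ (4:ℝ) ∂μ) ^ ((1:ℝ)/2)) ^ ((1:ℝ)/2) := by
        gcongr
    _ = (∫⁻ x, a x ^ (2:ℝ) ∂μ) ^ ((1:ℝ)/2) * (∫⁻ x, b x ^ (4:ℝ) ∂μ) ^ ((1:ℝ)/4) *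
          (∫⁻ x, c x ^ (4:ℝ) ∂μ) ^ ((1:ℝ)/4) := by
        rw [ENNReal.mul_rpow_of_nonneg _ _ (by norm_num : (0:ℝ) ≤ 1/2),
          ← ENNReal.rpow_mul, ← ENNReal.rpow_mul]
        norm_num
        ring

/-- Sobolev embedding: `‖u‖_{L⁴} ≤ K ‖Du‖_{L²}` for smooth `u` supported in a ball,
in dimension 2 or 3. -/
lemma sobolev_L4 (d : ℕ) (hd : d = 2 ∨ d = 3) (R : ℝ) (hR : 0 < R) :
    ∃ K : ℝ≥0∞, K ≠ ∞ ∧ ∀ u : EuclideanSpace ℝ (Fin d) → EuclideanSpace ℝ (Fin d),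
      ContDiff ℝ (⊤ : ℕ∞) u → tsupport u ⊆ closedBall 0 R →
      eLpNorm u 4 volume ≤ K * eLpNorm (fderiv ℝ u) 2 volume := by
  have hfr : Module.finrank ℝ (EuclideanSpace ℝ (Fin d)) = d := finrank_euclideanSpace_fin
  obtain ⟨p, hp1, hpd, hpq, hp2⟩ :
      ∃ p : ℝ≥0, 1 ≤ p ∧ (p : ℝ) < d ∧ (p : ℝ)⁻¹ - (d : ℝ)⁻¹ ≤ ((4 : ℝ≥0) : ℝ)⁻¹ ∧ p ≤ 2 := by
    rcases hd with rfl | rfl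
    · exact ⟨4/3, by rw [← NNReal.coe_le_coe]; norm_num, by norm_num, by norm_num,
        by rw [← NNReal.coe_le_coe]; norm_num⟩
    · exact ⟨2, by norm_num, by norm_num, by norm_num, le_rfl⟩
  set B : Set (EuclideanSpace ℝ (Fin d)) := closedBall 0 R
  have hB : Bornology.IsBounded B := Metric.isBounded_closedBall
  have hvolB : volume B ≠ ∞ := hB.measure_lt_top.ne
  set C₁ : ℝ≥0 := eLpNormLESNormFDerivOfLeConst (EuclideanSpace ℝ (Fin d)) volume B p 4
  have hexp : (0:ℝ) ≤ 1 / (p:ℝ≥0∞).toReal - 1 / (2:ℝ≥0∞).toReal := by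
    have hp0 : (0:ℝ) < p := lt_of_lt_of_le zero_lt_one hp1
    rw [ENNReal.toReal_ofNat, coe_toReal, sub_nonneg]
    have h2 : (p:ℝ) ≤ 2 := by exact_mod_cast hp2
    exact one_div_le_one_div_of_le hp0 h2
  set t : ℝ≥0∞ := volume B ^ (1 / (p:ℝ≥0∞).toReal - 1 / (2:ℝ≥0∞).toReal)
  have ht : t ≠ ∞ := ENNReal.rpow_ne_top_of_nonneg hexp hvolB
  refine ⟨C₁ * t, by finiteness, fun u hu hsupp => ?_⟩
  have hu1 : ContDiff ℝ 1 u := hu.of_le (by simp)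
  have h2u : Function.support u ⊆ B := (Function.support_subset_iff'.mpr fun x hx =>
    image_eq_zero_of_notMem_tsupport fun h => hx (hsupp h))
  have step1 : eLpNorm u 4 volume ≤ C₁ * eLpNorm (fderiv ℝ u) p volume := by
    refine eLpNorm_le_eLpNorm_fderiv_of_le volume hu1 h2u hp1 ?_ ?_ hB
    · rw [hfr]; exact_mod_cast hpd
    · rw [hfr]; exact hpq
  have hsupp' : Function.support (fderiv ℝ u) ⊆ B :=
    (support_fderiv_subset ℝ).trans hsupp
  have hmeas : AEStronglyMeasurable (fderiv ℝ u) (volume.restrict B) :=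
    (hu.continuous_fderiv (by simp)).aestronglyMeasurable
  have step2 : eLpNorm (fderiv ℝ u) p volume ≤ eLpNorm (fderiv ℝ u) 2 volume * t := by
    calc eLpNorm (fderiv ℝ u) p volume
        = eLpNorm (fderiv ℝ u) p (volume.restrict B) := by
          exact (eLpNorm_restrict_eq_of_support_subset (ε := EuclideanSpace ℝ (Fin d) →L[ℝ] EuclideanSpace ℝ (Fin d)) hsupp').symm
      _ ≤ eLpNorm (fderiv ℝ u) 2 (volume.restrict B) *
            (volume.restrict B) Set.univ ^ (1 / (p:ℝ≥0∞).toReal - 1 / (2:ℝ≥0∞).toReal) := by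
          refine eLpNorm_le_eLpNorm_mul_rpow_measure_univ ?_ hmeas
          exact_mod_cast ENNReal.coe_le_coe.mpr hp2
      _ = eLpNorm (fderiv ℝ u) 2 volume * t := by
          rw [show eLpNorm (fderiv ℝ u) 2 (volume.restrict B) = eLpNorm (fderiv ℝ u) 2 volume from
            eLpNorm_restrict_eq_of_support_subset (ε := EuclideanSpace ℝ (Fin d) →L[ℝ] EuclideanSpace ℝ (Fin d)) hsupp', Measure.restrict_apply_univ]
  calc eLpNorm u 4 volume ≤ C₁ * eLpNorm (fderiv ℝ u) p volume := step1
    _ ≤ C₁ * (eLpNorm (fderiv ℝ u) 2 volume * t) := by gcongr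
    _ = C₁ * t * eLpNorm (fderiv ℝ u) 2 volume := by ring

lemma frobNorm_zero {d : ℕ} :
    frobNorm (0 : EuclideanSpace ℝ (Fin d) →L[ℝ] EuclideanSpace ℝ (Fin d)) = 0 := by
  simp [frobNorm]

lemma continuous_frob_fderiv {d : ℕ} {f : EuclideanSpace ℝ (Fin d) → EuclideanSpace ℝ (Fin d)}
    (hf : ContDiff ℝ (⊤ : ℕ∞) f) : Continuous fun x => frobNorm (fderiv ℝ f x) := by
  have hc : Continuous (fderiv ℝ f) := hf.continuous_fderiv (by simp)
  apply Real.continuous_sqrt.comp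
  apply continuous_finset_sum
  intro i _
  apply continuous_finset_sum
  intro j _
  have h1 : Continuous fun x => fderiv ℝ f x (EuclideanSpace.single j 1) :=
    hc.clm_apply continuous_const
  exact ((EuclideanSpace.proj i).continuous.comp h1).pow 2

lemma fderiv_eq_zero_of_nmem {d : ℕ} {f : EuclideanSpace ℝ (Fin d) → EuclideanSpace ℝ (Fin d)}
    {R : ℝ} (hs : tsupport f ⊆ closedBall 0 R) {x : EuclideanSpace ℝ (Fin d)}
    (hx : x ∉ closedBall (0 : EuclideanSpace ℝ (Fin d)) R) : fderiv ℝ f x = 0 := by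
  by_contra h
  exact hx (hs (support_fderiv_subset ℝ (Function.mem_support.mpr h)))

lemma integrable_frob_sq {d : ℕ} {R : ℝ} {f : EuclideanSpace ℝ (Fin d) → EuclideanSpace ℝ (Fin d)}
    (hf : ContDiff ℝ (⊤ : ℕ∞) f) (hs : tsupport f ⊆ closedBall 0 R) :
    Integrable (fun x => frobNorm (fderiv ℝ f x) ^ 2) := by
  apply Continuous.integrable_of_hasCompactSupport
  · exact ((continuous_frob_fderiv hf).pow 2)
  · apply HasCompactSupport.intro (isCompact_closedBall (0 : EuclideanSpace ℝ (Fin d)) R)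
    intro x hx
    rw [fderiv_eq_zero_of_nmem hs hx, frobNorm_zero]
    norm_num

/-- The `L²` norm of the derivative is bounded by the square root of the integral of the
squared Frobenius norm. -/
lemma eLpNorm_fderiv_le_sqrt {d : ℕ} {R : ℝ}
    {f : EuclideanSpace ℝ (Fin d) → EuclideanSpace ℝ (Fin d)}
    (hf : ContDiff ℝ (⊤ : ℕ∞) f) (hs : tsupport f ⊆ closedBall 0 R) :
    eLpNorm (fderiv ℝ f) 2 volume ≤
      ENNReal.ofReal (Real.sqrt (∫ x, frobNorm (fderiv ℝ f x) ^ 2)) := by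
  have hint : Integrable (fun x => frobNorm (fderiv ℝ f x) ^ 2) := integrable_frob_sq hf hs
  have hInn : (0:ℝ) ≤ ∫ x, frobNorm (fderiv ℝ f x) ^ 2 :=
    integral_nonneg fun x => by positivity
  rw [eLpNorm_eq_lintegral_rpow_enorm_toReal two_ne_zero ENNReal.ofNat_ne_top]
  have hpt : ∀ x, (‖fderiv ℝ f x‖₊ : ℝ≥0∞) ^ ((2:ℝ≥0∞).toReal) ≤
      ENNReal.ofReal (frobNorm (fderiv ℝ f x) ^ 2) := by
    intro x
    rw [ENNReal.toReal_ofNat, ← enorm_eq_nnnorm, ← ofReal_norm,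
      ENNReal.ofReal_rpow_of_nonneg (norm_nonneg _) (by norm_num : (0:ℝ) ≤ 2)]
    apply ENNReal.ofReal_le_ofReal
    rw [show ((2:ℝ):ℝ) = ((2:ℕ):ℝ) by norm_num, Real.rpow_natCast]
    exact pow_le_pow_left₀ (norm_nonneg _) (opNorm_le_frobNorm _) 2
  calc (∫⁻ x, (‖fderiv ℝ f x‖₊ : ℝ≥0∞) ^ ((2:ℝ≥0∞).toReal)) ^ (1 / (2:ℝ≥0∞).toReal)
      ≤ (∫⁻ x, ENNReal.ofReal (frobNorm (fderiv ℝ f x) ^ 2)) ^ (1 / (2:ℝ≥0∞).toReal) := by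
        gcongr with x
        exact hpt x
    _ = (ENNReal.ofReal (∫ x, frobNorm (fderiv ℝ f x) ^ 2)) ^ ((1:ℝ)/2) := by
        rw [← ofReal_integral_eq_lintegral_ofReal hint
          (Filter.Eventually.of_forall fun x => by positivity), ENNReal.toReal_ofNat]
    _ = ENNReal.ofReal (Real.sqrt (∫ x, frobNorm (fderiv ℝ f x) ^ 2)) := by
        rw [ENNReal.ofReal_rpow_of_nonneg hInn (by norm_num : (0:ℝ) ≤ 1/2), Real.sqrt_eq_rpow]

/-- The main estimate for a single trilinear integral. -/
lemma inner_term_bound {d : ℕ} {R : ℝ} {K : ℝ≥0∞} (hKtop : K ≠ ∞)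
    (hK : ∀ f : EuclideanSpace ℝ (Fin d) → EuclideanSpace ℝ (Fin d),
      ContDiff ℝ (⊤ : ℕ∞) f → tsupport f ⊆ closedBall 0 R →
      eLpNorm f 4 volume ≤ K * eLpNorm (fderiv ℝ f) 2 volume)
    {p q r : EuclideanSpace ℝ (Fin d) → EuclideanSpace ℝ (Fin d)}
    (hp : ContDiff ℝ (⊤ : ℕ∞) p) (hq : ContDiff ℝ (⊤ : ℕ∞) q) (hr : ContDiff ℝ (⊤ : ℕ∞) r)
    (hsp : tsupport p ⊆ closedBall 0 R) (hsq : tsupport q ⊆ closedBall 0 R)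
    (hsr : tsupport r ⊆ closedBall 0 R) :
    |∫ x, (inner ℝ (fderiv ℝ q x (p x)) (r x) : ℝ)| ≤
      K.toReal ^ 2 * (Real.sqrt (∫ x, frobNorm (fderiv ℝ p x) ^ 2) *
        Real.sqrt (∫ x, frobNorm (fderiv ℝ q x) ^ 2) *
        Real.sqrt (∫ x, frobNorm (fderiv ℝ r x) ^ 2)) := by
  set Sp := Real.sqrt (∫ x, frobNorm (fderiv ℝ p x) ^ 2) with hSp
  set Sq := Real.sqrt (∫ x, frobNorm (fderiv ℝ q x) ^ 2) with hSq
  set Sr := Real.sqrt (∫ x, frobNorm (fderiv ℝ r x) ^ 2) with hSr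
  have hSpnn : 0 ≤ Sp := Real.sqrt_nonneg _
  have hSqnn : 0 ≤ Sq := Real.sqrt_nonneg _
  have hSrnn : 0 ≤ Sr := Real.sqrt_nonneg _
  -- pointwise bound
  have hpt : ∀ x, ENNReal.ofReal ‖(inner ℝ (fderiv ℝ q x (p x)) (r x) : ℝ)‖ ≤
      (‖fderiv ℝ q x‖₊ : ℝ≥0∞) * ‖p x‖₊ * ‖r x‖₊ := by
    intro x
    have h1 : ‖(inner ℝ (fderiv ℝ q x (p x)) (r x) : ℝ)‖ ≤ ‖fderiv ℝ q x‖ * ‖p x‖ * ‖r x‖ := by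
      calc ‖(inner ℝ (fderiv ℝ q x (p x)) (r x) : ℝ)‖
          ≤ ‖fderiv ℝ q x (p x)‖ * ‖r x‖ := norm_inner_le_norm _ _
        _ ≤ ‖fderiv ℝ q x‖ * ‖p x‖ * ‖r x‖ := by
            gcongr
            exact (fderiv ℝ q x).le_opNorm _
    calc ENNReal.ofReal ‖(inner ℝ (fderiv ℝ q x (p x)) (r x) : ℝ)‖
        ≤ ENNReal.ofReal (‖fderiv ℝ q x‖ * ‖p x‖ * ‖r x‖) := ENNReal.ofReal_le_ofReal h1
      _ = (‖fderiv ℝ q x‖₊ : ℝ≥0∞) * ‖p x‖₊ * ‖r x‖₊ := by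
          rw [ENNReal.ofReal_mul (by positivity), ENNReal.ofReal_mul (norm_nonneg _),
            ofReal_norm, ofReal_norm, ofReal_norm]
          rfl
  -- measurability
  have hma : AEMeasurable (fun x => (‖fderiv ℝ q x‖₊ : ℝ≥0∞)) volume :=
    ((hq.continuous_fderiv (by simp)).nnnorm.aemeasurable).coe_nnreal_ennreal
  have hmb : AEMeasurable (fun x => (‖p x‖₊ : ℝ≥0∞)) volume :=
    (hp.continuous.nnnorm.aemeasurable).coe_nnreal_ennreal
  have hmc : AEMeasurable (fun x => (‖r x‖₊ : ℝ≥0∞)) volume :=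
    (hr.continuous.nnnorm.aemeasurable).coe_nnreal_ennreal
  -- factor bounds
  have hq2 : (∫⁻ x, (‖fderiv ℝ q x‖₊ : ℝ≥0∞) ^ (2:ℝ)) ^ ((1:ℝ)/2) ≤ ENNReal.ofReal Sq := by
    have := eLpNorm_fderiv_le_sqrt hq hsq
    rwa [eLpNorm_eq_lintegral_rpow_enorm_toReal two_ne_zero ENNReal.ofNat_ne_top,
      ENNReal.toReal_ofNat] at this
  have hL4 : ∀ (f : EuclideanSpace ℝ (Fin d) → EuclideanSpace ℝ (Fin d)),
      ContDiff ℝ (⊤ : ℕ∞) f → tsupport f ⊆ closedBall 0 R →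
      (∫⁻ x, (‖f x‖₊ : ℝ≥0∞) ^ (4:ℝ)) ^ ((1:ℝ)/4) ≤
        K * ENNReal.ofReal (Real.sqrt (∫ x, frobNorm (fderiv ℝ f x) ^ 2)) := by
    intro f hf hsf
    have h1 := hK f hf hsf
    rw [eLpNorm_eq_lintegral_rpow_enorm_toReal (by norm_num) (by norm_num)] at h1
    norm_num at h1
    calc (∫⁻ x, (‖f x‖₊ : ℝ≥0∞) ^ (4:ℝ)) ^ ((1:ℝ)/4)
        ≤ K * eLpNorm (fderiv ℝ f) 2 volume := by
          convert h1 using 2 <;> norm_num <;> rfl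
      _ ≤ K * ENNReal.ofReal (Real.sqrt (∫ x, frobNorm (fderiv ℝ f x) ^ 2)) := by
          gcongr
          exact eLpNorm_fderiv_le_sqrt hf hsf
  have hp4 := hL4 p hp hsp
  have hr4 := hL4 r hr hsr
  -- combine
  have hmain : (∫⁻ x, ENNReal.ofReal ‖(inner ℝ (fderiv ℝ q x (p x)) (r x) : ℝ)‖) ≤
      ENNReal.ofReal Sq * (K * ENNReal.ofReal Sp) * (K * ENNReal.ofReal Sr) := by
    calc (∫⁻ x, ENNReal.ofReal ‖(inner ℝ (fderiv ℝ q x (p x)) (r x) : ℝ)‖)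
        ≤ ∫⁻ x, (‖fderiv ℝ q x‖₊ : ℝ≥0∞) * ‖p x‖₊ * ‖r x‖₊ :=
          lintegral_mono fun x => hpt x
      _ ≤ (∫⁻ x, (‖fderiv ℝ q x‖₊ : ℝ≥0∞) ^ (2:ℝ)) ^ ((1:ℝ)/2) *
            (∫⁻ x, (‖p x‖₊ : ℝ≥0∞) ^ (4:ℝ)) ^ ((1:ℝ)/4) *
            (∫⁻ x, (‖r x‖₊ : ℝ≥0∞) ^ (4:ℝ)) ^ ((1:ℝ)/4) := holder244 volume hma hmb hmc
      _ ≤ ENNReal.ofReal Sq * (K * ENNReal.ofReal Sp) * (K * ENNReal.ofReal Sr) := by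
          gcongr
  have hfin : ENNReal.ofReal Sq * (K * ENNReal.ofReal Sp) * (K * ENNReal.ofReal Sr) ≠ ∞ := by
    finiteness
  calc |∫ x, (inner ℝ (fderiv ℝ q x (p x)) (r x) : ℝ)|
      ≤ (∫⁻ x, ENNReal.ofReal ‖(inner ℝ (fderiv ℝ q x (p x)) (r x) : ℝ)‖).toReal := by
        rw [← Real.norm_eq_abs]
        exact norm_integral_le_lintegral_norm _
    _ ≤ (ENNReal.ofReal Sq * (K * ENNReal.ofReal Sp) * (K * ENNReal.ofReal Sr)).toReal :=
        ENNReal.toReal_mono hfin hmain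
    _ = Sq * (K.toReal * Sp) * (K.toReal * Sr) := by
        rw [ENNReal.toReal_mul, ENNReal.toReal_mul, ENNReal.toReal_mul, ENNReal.toReal_mul,
          ENNReal.toReal_ofReal hSqnn, ENNReal.toReal_ofReal hSpnn, ENNReal.toReal_ofReal hSrnn]
    _ = K.toReal ^ 2 * (Sp * Sq * Sr) := by ring

end Aux

/-- Bound (2.8) of the paper: `|b*(u,v,w)| ≤ C ‖∇u‖ ‖∇v‖ ‖∇w‖` for compactly supported
smooth vector fields on a fixed ball in dimension `d ∈ {2,3}`. -/
theorem bstar_gradient_bound (d : ℕ) (hd : d = 2 ∨ d = 3) (R : ℝ) (hR : 0 < R) :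
    ∃ C : ℝ, 0 < C ∧
      ∀ u v w : EuclideanSpace ℝ (Fin d) → EuclideanSpace ℝ (Fin d),
        ContDiff ℝ (⊤ : ℕ∞) u → ContDiff ℝ (⊤ : ℕ∞) v → ContDiff ℝ (⊤ : ℕ∞) w →
        tsupport u ⊆ Metric.closedBall 0 R →
        tsupport v ⊆ Metric.closedBall 0 R →
        tsupport w ⊆ Metric.closedBall 0 R →
        |bstar u v w| ≤
          C * Real.sqrt (∫ x, frobNorm (fderiv ℝ u x) ^ 2) *
            Real.sqrt (∫ x, frobNorm (fderiv ℝ v x) ^ 2) *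
            Real.sqrt (∫ x, frobNorm (fderiv ℝ w x) ^ 2) := by
  obtain ⟨K, hKtop, hK⟩ := sobolev_L4 d hd R hR
  refine ⟨K.toReal ^ 2 + 1, by positivity, fun u v w hu hv hw hsu hsv hsw => ?_⟩
  have h1 := inner_term_bound hKtop hK hu hv hw hsu hsv hsw
  have h2 := inner_term_bound hKtop hK hu hw hv hsu hsw hsv
  set Su := Real.sqrt (∫ x, frobNorm (fderiv ℝ u x) ^ 2)
  set Sv := Real.sqrt (∫ x, frobNorm (fderiv ℝ v x) ^ 2)
  set Sw := Real.sqrt (∫ x, frobNorm (fderiv ℝ w x) ^ 2)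
  have hSu : 0 ≤ Su := Real.sqrt_nonneg _
  have hSv : 0 ≤ Sv := Real.sqrt_nonneg _
  have hSw : 0 ≤ Sw := Real.sqrt_nonneg _
  rw [bstar]
  set I₁ := ∫ x, (inner ℝ (fderiv ℝ v x (u x)) (w x) : ℝ)
  set I₂ := ∫ x, (inner ℝ (fderiv ℝ w x (u x)) (v x) : ℝ)
  have htri : |1/2 * I₁ - 1/2 * I₂| ≤ 1/2 * |I₁| + 1/2 * |I₂| := by
    calc |1/2 * I₁ - 1/2 * I₂| ≤ |1/2 * I₁| + |1/2 * I₂| := abs_sub _ _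
      _ = 1/2 * |I₁| + 1/2 * |I₂| := by rw [abs_mul, abs_mul, abs_of_nonneg (by norm_num : (0:ℝ) ≤ 1/2)]
  have hKnn : 0 ≤ K.toReal := ENNReal.toReal_nonneg
  nlinarith [mul_nonneg (mul_nonneg hSu hSv) hSw, sq_nonneg K.toReal,
    mul_nonneg (mul_nonneg hSu hSw) hSv]
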